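/- arXiv:2511.23310 — 2 statements merged into one kernel-verified Lean document; each statement's English description precedes it below -/
import Mathlib

section
/- (Bound under the optimal learning-rate schedule) Set a_t := E‖∇f(θ_t)‖² and assume a_t + v_t > 0 for all t. If the learning rates are chosen as η_t = a_t / (L' (a_t + v_t)), then for the loss 𝓛(θ) := f(θ*) − f(θ), E[𝓛(θ_T)] ≤ E[𝓛(θ_0)] − Σ_{t=0}^{T−1} a_t² / (2 L' (a_t + v_t)). -/
/-!
For an `L`-smooth `f`, the derivatives of `s ↦ f (x + s • u)` and of its tangent line at `0`
differ by at most `L s ‖u‖²`, so `f (x + u) ≥ f x + ⟪∇f x, u⟫ - L ‖u‖² / 2`. Apply this to the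
step `u = η (∇f θ + ξ)`: since `∇f θ` is `ℱ_t`-measurable and `ξ` is a martingale difference,
the cross term `⟪∇f θ, ξ⟫` has mean zero, so `E ⟪∇f θ, u⟫ = η a` and `E ‖∇f θ + ξ‖² ≤ a + v`.
Every step therefore raises `E f` by at least `η a - L η² (a + v) / 2`, which for the stated `η`
is `a² / (2 L (a + v))`; summing over the steps gives the bound.
-/

open MeasureTheory
open scoped NNReal RealInnerProductSpace

section Descent

variable {E : Type*} [NormedAddCommGroup E] [InnerProductSpace ℝ E] [CompleteSpace E]
  {f : E → ℝ} {f' : E → E} {K : ℝ≥0}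

theorem abs_sub_sub_inner_le_of_lipschitzWith_gradient (hf : ∀ x, HasGradientAt f (f' x) x)
    (hK : LipschitzWith K f') (x u : E) :
    |f (x + u) - f x - ⟪f' x, u⟫| ≤ K / 2 * ‖u‖ ^ 2 := by
  have hderiv : ∀ s : ℝ, HasDerivAt (fun s : ℝ => f (x + s • u) - f x - s * ⟪f' x, u⟫)
      (⟪f' (x + s • u) - f' x, u⟫) s := by
    intro s
    have hline : HasDerivAt (fun s : ℝ => x + s • u) u s := by
      simpa using ((hasDerivAt_id s).smul_const u).const_add x
    refine ((((hf _).hasFDerivAt.comp_hasDerivAt s hline).sub_const (f x)).sub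
      ((hasDerivAt_id' s).mul_const ⟪f' x, u⟫)).congr_deriv ?_
    simp [inner_sub_left]
  have hbound : ∀ s : ℝ, HasDerivAt (fun s : ℝ => K / 2 * s ^ 2 * ‖u‖ ^ 2) (K * s * ‖u‖ ^ 2) s := by
    intro s
    refine (((hasDerivAt_pow 2 s).const_mul (K / 2 : ℝ)).mul_const (‖u‖ ^ 2)).congr_deriv ?_
    push_cast; ring
  have hslope : ∀ s ∈ Set.Ico (0 : ℝ) 1, ‖⟪f' (x + s • u) - f' x, u⟫‖ ≤ K * s * ‖u‖ ^ 2 := by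
    intro s hs
    calc ‖⟪f' (x + s • u) - f' x, u⟫‖ ≤ ‖f' (x + s • u) - f' x‖ * ‖u‖ := norm_inner_le_norm _ _
      _ ≤ K * ‖x + s • u - x‖ * ‖u‖ := by gcongr; exact hK.norm_sub_le _ _
      _ = K * s * ‖u‖ ^ 2 := by
        rw [add_sub_cancel_left, norm_smul, Real.norm_of_nonneg hs.1]; ring
  simpa using image_norm_le_of_norm_deriv_right_le_deriv_boundary
    (fun s _ => (hderiv s).continuousAt.continuousWithinAt)
    (fun s _ => (hderiv s).hasDerivWithinAt) (by simp) hbound hslope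
    (Set.right_mem_Icc.2 zero_le_one)

end Descent

section Moments

variable {Ω E : Type*} {m m0 : MeasurableSpace Ω} {μ : Measure Ω}
  [NormedAddCommGroup E] [InnerProductSpace ℝ E]

theorem MeasureTheory.MemLp.integrable_inner {g h : Ω → E} (hg : MemLp g 2 μ)
    (hh : MemLp h 2 μ) : Integrable (fun ω => ⟪g ω, h ω⟫) μ := by
  rw [← memLp_one_iff_integrable]
  exact hg.of_bilin (fun x y => ⟪x, y⟫) 1 hh (hg.1.inner hh.1)
    (ae_of_all _ fun ω => by simpa using nnnorm_inner_le_nnnorm (𝕜 := ℝ) (g ω) (h ω))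

theorem integral_norm_add_sq_of_integral_inner_eq_zero {g h : Ω → E} (hg : MemLp g 2 μ)
    (hh : MemLp h 2 μ) (horth : ∫ ω, ⟪g ω, h ω⟫ ∂μ = 0) :
    ∫ ω, ‖g ω + h ω‖ ^ 2 ∂μ = ∫ ω, ‖g ω‖ ^ 2 ∂μ + ∫ ω, ‖h ω‖ ^ 2 ∂μ := by
  have hg2 := (memLp_two_iff_integrable_sq_norm hg.1).1 hg
  have hh2 := (memLp_two_iff_integrable_sq_norm hh.1).1 hh
  have hgh := (hg.integrable_inner hh).const_mul 2
  simp_rw [norm_add_sq_real]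
  rw [integral_add (f := fun ω => ‖g ω‖ ^ 2 + 2 * ⟪g ω, h ω⟫) (hg2.add hgh) hh2,
    integral_add hg2 hgh, integral_const_mul, horth, mul_zero, add_zero]

theorem integral_inner_eq_zero_of_condExp_eq_zero [CompleteSpace E] (hm : m ≤ m0)
    [SigmaFinite (μ.trim hm)] {g ξ : Ω → E} (hg : StronglyMeasurable[m] g)
    (hgξ : Integrable (fun ω => ⟪g ω, ξ ω⟫) μ) (hξ : Integrable ξ μ) (hmean : μ[ξ|m] =ᵐ[μ] 0) :
    ∫ ω, ⟪g ω, ξ ω⟫ ∂μ = 0 := by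
  have hpull := condExp_bilin_of_stronglyMeasurable_left (innerSL ℝ) hg hgξ hξ
  rw [← integral_condExp hm]
  calc ∫ ω, (μ[fun ω => ⟪g ω, ξ ω⟫|m]) ω ∂μ = ∫ _, (0 : ℝ) ∂μ := by
        refine integral_congr_ae (hpull.trans ?_)
        filter_upwards [hmean] with ω hω
        simp [hω]
    _ = 0 := integral_zero _ _

theorem integral_le_of_condExp_le [IsProbabilityMeasure μ] (hm : m ≤ m0) {X : Ω → ℝ} {c : ℝ}
    (hc : ∀ᵐ ω ∂μ, μ[X|m] ω ≤ c) : ∫ ω, X ω ∂μ ≤ c := by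
  rw [← integral_condExp hm]
  simpa using integral_mono_ae integrable_condExp (integrable_const c) hc

end Moments

section ExpectedAscent

variable {Ω E : Type*} {m m0 : MeasurableSpace Ω} {μ : Measure Ω}
  [NormedAddCommGroup E] [InnerProductSpace ℝ E] [CompleteSpace E]
  {f : E → ℝ} {f' : E → E} {K : ℝ≥0}

theorem integrable_comp_add_and_integral_add_inner_sub_le (hf : ∀ x, HasGradientAt f (f' x) x)
    (hK : LipschitzWith K f') {x u : Ω → E} (hx : AEStronglyMeasurable x μ)
    (hfx : Integrable (fun ω => f (x ω)) μ) (hxu : Integrable (fun ω => ⟪f' (x ω), u ω⟫) μ)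
    (hu : MemLp u 2 μ) :
    Integrable (fun ω => f (x ω + u ω)) μ ∧
      ∫ ω, f (x ω) ∂μ + ∫ ω, ⟪f' (x ω), u ω⟫ ∂μ - K / 2 * ∫ ω, ‖u ω‖ ^ 2 ∂μ
        ≤ ∫ ω, f (x ω + u ω) ∂μ := by
  have hf_cont : Continuous f := continuous_iff_continuousAt.2 fun y => (hf y).continuousAt
  have hu2 := ((memLp_two_iff_integrable_sq_norm hu.1).1 hu).const_mul (K / 2 : ℝ)
  set R : Ω → ℝ := fun ω => f (x ω + u ω) - f (x ω) - ⟪f' (x ω), u ω⟫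
  have hR_le : ∀ ω, |R ω| ≤ K / 2 * ‖u ω‖ ^ 2 := fun ω =>
    abs_sub_sub_inner_le_of_lipschitzWith_gradient hf hK (x ω) (u ω)
  have hR : Integrable R μ := by
    refine hu2.mono' ?_ (ae_of_all _ hR_le)
    exact ((hf_cont.comp_aestronglyMeasurable (hx.add hu.1)).sub
      (hf_cont.comp_aestronglyMeasurable hx)).sub hxu.1
  have hsplit : (fun ω => f (x ω + u ω)) = fun ω => f (x ω) + ⟪f' (x ω), u ω⟫ + R ω := by
    funext ω; simp only [R]; ring
  have hR_ge : -(K / 2 * ∫ ω, ‖u ω‖ ^ 2 ∂μ) ≤ ∫ ω, R ω ∂μ := by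
    rw [← integral_const_mul, ← integral_neg]
    exact integral_mono hu2.neg hR fun ω => neg_le_of_abs_le (hR_le ω)
  rw [hsplit, integral_add (f := fun ω => f (x ω) + ⟪f' (x ω), u ω⟫) (hfx.add hxu) hR,
    integral_add hfx hxu]
  exact ⟨(hfx.add hxu).add hR, by linarith⟩

end ExpectedAscent

section SGDStep

variable {Ω E : Type*} {m m0 : MeasurableSpace Ω} {μ : Measure Ω} [IsProbabilityMeasure μ]
  [NormedAddCommGroup E] [InnerProductSpace ℝ E] [CompleteSpace E]
  {f : E → ℝ} {f' : E → E} {K : ℝ≥0}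

theorem integrable_sgd_step_and_integral_le (hf : ∀ x, HasGradientAt f (f' x) x)
    (hK : LipschitzWith K f') (hm : m ≤ m0) {x ξ : Ω → E} (hx : StronglyMeasurable[m] x)
    (hfx : Integrable (fun ω => f (x ω)) μ) (hgrad : Integrable (fun ω => ‖f' (x ω)‖ ^ 2) μ)
    (hξ : MemLp ξ 2 μ) (hmean : μ[ξ|m] =ᵐ[μ] 0) {v : ℝ}
    (hvar : ∀ᵐ ω ∂μ, μ[fun ω => ‖ξ ω‖ ^ 2|m] ω ≤ v) (η : ℝ) :
    Integrable (fun ω => f (x ω + η • (f' (x ω) + ξ ω))) μ ∧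
      ∫ ω, f (x ω) ∂μ + η * ∫ ω, ‖f' (x ω)‖ ^ 2 ∂μ
          - K / 2 * η ^ 2 * (∫ ω, ‖f' (x ω)‖ ^ 2 ∂μ + v)
        ≤ ∫ ω, f (x ω + η • (f' (x ω) + ξ ω)) ∂μ := by
  set g := fun ω => f' (x ω)
  have hg_meas : StronglyMeasurable[m] g := hK.continuous.comp_stronglyMeasurable hx
  have hg : MemLp g 2 μ :=
    (memLp_two_iff_integrable_sq_norm (hg_meas.mono hm).aestronglyMeasurable).2 hgrad
  have horth : ∫ ω, ⟪g ω, ξ ω⟫ ∂μ = 0 := integral_inner_eq_zero_of_condExp_eq_zero hm hg_meas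
    (hg.integrable_inner hξ) (hξ.integrable one_le_two) hmean
  have hu : MemLp (fun ω => η • (g ω + ξ ω)) 2 μ := (hg.add hξ).const_smul η
  obtain ⟨hint, hle⟩ := integrable_comp_add_and_integral_add_inner_sub_le hf hK
    (hx.mono hm).aestronglyMeasurable hfx (hg.integrable_inner hu) hu
  refine ⟨hint, le_trans ?_ hle⟩
  have hinner : ∫ ω, ⟪g ω, η • (g ω + ξ ω)⟫ ∂μ = η * ∫ ω, ‖g ω‖ ^ 2 ∂μ := by
    simp_rw [inner_smul_right, inner_add_right, real_inner_self_eq_norm_sq]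
    rw [integral_const_mul, integral_add hgrad (hg.integrable_inner hξ), horth, add_zero]
  have hnorm : ∫ ω, ‖η • (g ω + ξ ω)‖ ^ 2 ∂μ = η ^ 2 * ∫ ω, ‖g ω + ξ ω‖ ^ 2 ∂μ := by
    simp_rw [norm_smul, mul_pow, Real.norm_eq_abs, sq_abs]
    exact integral_const_mul _ _
  have hsecond : ∫ ω, ‖g ω + ξ ω‖ ^ 2 ∂μ ≤ ∫ ω, ‖g ω‖ ^ 2 ∂μ + v := by
    rw [integral_norm_add_sq_of_integral_inner_eq_zero hg hξ horth]
    gcongr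
    exact integral_le_of_condExp_le hm hvar
  rw [hinner, hnorm, ← mul_assoc]
  gcongr

end SGDStep

section Telescoping

variable {Ω : Type*} {m0 : MeasurableSpace Ω} {μ : Measure Ω}

theorem integrable_and_integral_add_sum_le {u : ℕ → Ω → ℝ} {c : ℕ → ℝ} {T : ℕ}
    (h0 : Integrable (u 0) μ)
    (hstep : ∀ t < T, Integrable (u t) μ →
      Integrable (u (t + 1)) μ ∧ ∫ ω, u t ω ∂μ + c t ≤ ∫ ω, u (t + 1) ω ∂μ) :
    ∀ n ≤ T, Integrable (u n) μ ∧
      ∫ ω, u 0 ω ∂μ + ∑ t ∈ Finset.range n, c t ≤ ∫ ω, u n ω ∂μ := by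
  intro n
  induction n with
  | zero => intro _; simpa using h0
  | succ n ih =>
    intro hn
    obtain ⟨hint, hle⟩ := ih (Nat.le_of_succ_le hn)
    obtain ⟨hint', hle'⟩ := hstep n hn hint
    rw [Finset.sum_range_succ]
    exact ⟨hint', by linarith⟩

end Telescoping

theorem sgd_loss_bound_optimal_lr_general
    {d : ℕ}
    {Ω : Type*} {m0 : MeasurableSpace Ω} (P : Measure Ω) [IsProbabilityMeasure P]
    (ℱ : Filtration ℕ m0)
    (f : EuclideanSpace ℝ (Fin d) → ℝ)
    (f' : EuclideanSpace ℝ (Fin d) → EuclideanSpace ℝ (Fin d))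
    (L' : ℝ) (hL' : 0 < L')
    (hdiff : ∀ x, HasGradientAt f (f' x) x)
    (hlip : ∀ x y, ‖f' x - f' y‖ ≤ L' * ‖x - y‖)
    (θstar : EuclideanSpace ℝ (Fin d))
    (T : ℕ) (η v : ℕ → ℝ)
    (θ : ℕ → Ω → EuclideanSpace ℝ (Fin d))
    (ξ : ℕ → Ω → EuclideanSpace ℝ (Fin d))
    (hθmeas : ∀ t, StronglyMeasurable[ℱ t] (θ t))
    (hθ0int : Integrable (fun ω => f θstar - f (θ 0 ω)) P)
    (hrec : ∀ t < T, ∀ ω, θ (t + 1) ω = θ t ω + η t • (f' (θ t ω) + ξ t ω))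
    (hξL2 : ∀ t < T, MemLp (ξ t) 2 P)
    (hξmean : ∀ t < T, P[fun ω => ξ t ω|ℱ t] =ᵐ[P] 0)
    (hξvar : ∀ t < T, ∀ᵐ ω ∂P, (P[fun ω => ‖ξ t ω‖ ^ 2|ℱ t]) ω ≤ v t)
    (hgradint : ∀ t, Integrable (fun ω => ‖f' (θ t ω)‖ ^ 2) P)
    (a : ℕ → ℝ) (ha : ∀ t, a t = ∫ ω, ‖f' (θ t ω)‖ ^ 2 ∂P)
    (hav : ∀ t < T, 0 < a t + v t)
    (hηdef : ∀ t < T, η t = a t / (L' * (a t + v t))) :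
    ∫ ω, (f θstar - f (θ T ω)) ∂P
      ≤ ∫ ω, (f θstar - f (θ 0 ω)) ∂P
        - ∑ t ∈ Finset.range T, a t ^ 2 / (2 * L' * (a t + v t)) := by
  have hL'_coe : (L'.toNNReal : ℝ) = L' := Real.coe_toNNReal _ hL'.le
  have hK : LipschitzWith L'.toNNReal f' :=
    LipschitzWith.of_dist_le_mul fun x y => by simpa only [dist_eq_norm, hL'_coe] using hlip x y
  have hstep : ∀ t < T, Integrable (fun ω => f (θ t ω)) P →
      Integrable (fun ω => f (θ (t + 1) ω)) P ∧
        ∫ ω, f (θ t ω) ∂P + a t ^ 2 / (2 * L' * (a t + v t)) ≤ ∫ ω, f (θ (t + 1) ω) ∂P := by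
    intro t ht hint
    -- `η t` maximises the guaranteed gain `η a - L' η² (a + v) / 2`
    have hgain : η t * a t - L' / 2 * η t ^ 2 * (a t + v t)
        = a t ^ 2 / (2 * L' * (a t + v t)) := by
      rw [hηdef t ht]
      field_simp [hL'.ne', (hav t ht).ne']
      ring
    simp_rw [hrec t ht]
    obtain ⟨hint', hle⟩ := integrable_sgd_step_and_integral_le hdiff hK (ℱ.le t) (hθmeas t) hint
      (hgradint t) (hξL2 t ht) (hξmean t ht) (hξvar t ht) (η t)
    rw [← ha t, hL'_coe] at hle
    exact ⟨hint', by linarith⟩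
  have hint0 : Integrable (fun ω => f (θ 0 ω)) P := by
    refine ((integrable_const (f θstar)).sub hθ0int).congr (ae_of_all _ fun ω => ?_)
    simp
  obtain ⟨hintT, hleT⟩ := integrable_and_integral_add_sum_le (u := fun t ω => f (θ t ω))
    hint0 hstep T le_rfl
  rw [integral_sub (integrable_const _) hintT, integral_sub (integrable_const _) hint0]
  linarith

/-- (Bound under the optimal learning-rate schedule.) In the
stochastic gradient ascent setting with `a_t = E‖∇f(θ_t)‖²`, `a_t + v_t > 0`,
and learning rates `η_t = a_t / (L'(a_t + v_t))`, the loss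
`𝓛(θ) = f(θ*) − f(θ)` satisfies
`E[𝓛(θ_T)] ≤ E[𝓛(θ_0)] − Σ_t a_t² / (2L'(a_t + v_t))`. -/
theorem sgd_loss_bound_optimal_lr
    {d : ℕ} (hd : 1 ≤ d)
    {Ω : Type*} {m0 : MeasurableSpace Ω} (P : Measure Ω) [IsProbabilityMeasure P]
    (ℱ : Filtration ℕ m0)
    (f : EuclideanSpace ℝ (Fin d) → ℝ)
    (f' : EuclideanSpace ℝ (Fin d) → EuclideanSpace ℝ (Fin d))
    (L' : ℝ) (hL' : 0 < L')
    (hdiff : ∀ x, HasGradientAt f (f' x) x)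
    (hlip : ∀ x y, ‖f' x - f' y‖ ≤ L' * ‖x - y‖)
    (θstar : EuclideanSpace ℝ (Fin d)) (hmax : ∀ x, f x ≤ f θstar)
    (T : ℕ) (η v : ℕ → ℝ) (hv : ∀ t < T, 0 ≤ v t)
    (θ : ℕ → Ω → EuclideanSpace ℝ (Fin d))
    (ξ : ℕ → Ω → EuclideanSpace ℝ (Fin d))
    (hθmeas : ∀ t, StronglyMeasurable[ℱ t] (θ t))
    (hθ0int : Integrable (fun ω => f θstar - f (θ 0 ω)) P)
    (hrec : ∀ t < T, ∀ ω, θ (t + 1) ω = θ t ω + η t • (f' (θ t ω) + ξ t ω))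
    (hξmeas : ∀ t < T, StronglyMeasurable[ℱ (t + 1)] (ξ t))
    (hξL2 : ∀ t < T, MemLp (ξ t) 2 P)
    (hξmean : ∀ t < T, P[fun ω => ξ t ω|ℱ t] =ᵐ[P] 0)
    (hξvar : ∀ t < T, ∀ᵐ ω ∂P, (P[fun ω => ‖ξ t ω‖ ^ 2|ℱ t]) ω ≤ v t)
    (hgradint : ∀ t, Integrable (fun ω => ‖f' (θ t ω)‖ ^ 2) P)
    (a : ℕ → ℝ) (ha : ∀ t, a t = ∫ ω, ‖f' (θ t ω)‖ ^ 2 ∂P)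
    (hav : ∀ t < T, 0 < a t + v t)
    (hηdef : ∀ t < T, η t = a t / (L' * (a t + v t))) :
    ∫ ω, (f θstar - f (θ T ω)) ∂P
      ≤ ∫ ω, (f θstar - f (θ 0 ω)) ∂P
        - ∑ t ∈ Finset.range T, a t ^ 2 / (2 * L' * (a t + v t)) :=
  sgd_loss_bound_optimal_lr_general P ℱ f f' L' hL' hdiff hlip θstar T η v θ ξ hθmeas hθ0int hrec
    hξL2 hξmean hξvar hgradint a ha hav hηdef
end

section
/- (Optimal Sampling Strategy) Define S := Σ_{t=0}^{T−1} √h_t, R := Σ_{t=0}^{T−1} h_t / a_t, and N_t* := ((C + R)/S) · √h_t − h_t / a_t, and assume N_t* > 0 for every t. Then Σ_{t=0}^{T−1} N_t* = C, and for all positive reals N_0, …, N_{T−1} with Σ_{t=0}^{T−1} N_t ≤ C, one has Σ_{t=0}^{T−1} h_t / (N_t + h_t / a_t) ≥ S² / (C + R), with equality when N_t = N_t* for all t. -/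
/-!
Write `d_t = N_t + h_t/a_t`. The budget gives `Σ d_t ≤ C + R`, and the Cauchy–Schwarz inequality
in Engel's form, `(Σ √h_t)² / Σ d_t ≤ Σ h_t / d_t`, yields the lower bound. Equality in
Cauchy–Schwarz holds when `d_t` is proportional to `√h_t`, which is exactly how `N*` is defined:
`N*_t + h_t/a_t = ((C + R)/S) √h_t`.
-/

open Finset

theorem sq_sum_sqrt_div_le_sum_div {ι : Type*} (s : Finset ι) {h d : ι → ℝ}
    (hh : ∀ i ∈ s, 0 ≤ h i) (hd : ∀ i ∈ s, 0 < d i) {B : ℝ} (hB : ∑ i ∈ s, d i ≤ B) :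
    (∑ i ∈ s, √(h i)) ^ 2 / B ≤ ∑ i ∈ s, h i / d i := by
  rcases s.eq_empty_or_nonempty with rfl | hs
  · simp
  calc (∑ i ∈ s, √(h i)) ^ 2 / B
      ≤ (∑ i ∈ s, √(h i)) ^ 2 / ∑ i ∈ s, d i :=
        div_le_div_of_nonneg_left (sq_nonneg _) (sum_pos hd hs) hB
    _ ≤ ∑ i ∈ s, √(h i) ^ 2 / d i := sq_sum_div_le_sum_sq_div s _ hd
    _ = ∑ i ∈ s, h i / d i := sum_congr rfl fun i hi => by rw [Real.sq_sqrt (hh i hi)]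

theorem sum_div_mul_sqrt {ι : Type*} (s : Finset ι) (h : ι → ℝ) (c : ℝ) :
    ∑ i ∈ s, h i / (c * √(h i)) = (∑ i ∈ s, √(h i)) / c := by
  simp only [div_mul_eq_div_div_swap, Real.div_sqrt, sum_div]

theorem optimal_sampling_strategy_general
    (T : ℕ) (hT : 1 ≤ T)
    (h a : Fin T → ℝ) (hh : ∀ t, 0 < h t) (ha : ∀ t, 0 < a t)
    (C : ℝ)
    (S R : ℝ)
    (hS : S = ∑ t, Real.sqrt (h t))
    (hR : R = ∑ t, h t / a t)
    (Nstar : Fin T → ℝ)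
    (hNstar : ∀ t, Nstar t = (C + R) / S * Real.sqrt (h t) - h t / a t) :
    (∑ t, Nstar t = C) ∧
    (∀ N : Fin T → ℝ, (∀ t, 0 < N t) → (∑ t, N t ≤ C) →
      S ^ 2 / (C + R) ≤ ∑ t, h t / (N t + h t / a t)) ∧
    (∑ t, h t / (Nstar t + h t / a t) = S ^ 2 / (C + R)) := by
  have hS_pos : 0 < S :=
    hS ▸ sum_pos (fun t _ => Real.sqrt_pos.2 (hh t)) (univ_nonempty_iff.2 ⟨⟨0, hT⟩⟩)
  have hNstar_add : ∀ t, Nstar t + h t / a t = (C + R) / S * √(h t) := fun t => by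
    rw [hNstar]; ring
  refine ⟨?_, fun N hN hNC => ?_, ?_⟩
  · simp only [hNstar, sum_sub_distrib, ← mul_sum, ← hS, ← hR]
    field_simp
    ring
  · refine hS ▸ sq_sum_sqrt_div_le_sum_div _ (fun t _ => (hh t).le)
      (fun t _ => add_pos (hN t) (div_pos (hh t) (ha t))) ?_
    rw [sum_add_distrib, ← hR]
    linarith
  · simp only [hNstar_add, sum_div_mul_sqrt, ← hS]
    field_simp

/-- (Optimal Sampling Strategy.) With `S = Σ_t √h_t`,
`R = Σ_t h_t/a_t` and `N*_t = ((C+R)/S)·√h_t − h_t/a_t` all positive, the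
budget is saturated, `Σ_t N*_t = C`; every feasible allocation
`N_t > 0` with `Σ_t N_t ≤ C` satisfies
`Σ_t h_t/(N_t + h_t/a_t) ≥ S²/(C+R)`, with equality at `N = N*`. -/
theorem optimal_sampling_strategy
    (T : ℕ) (hT : 1 ≤ T)
    (h a : Fin T → ℝ) (hh : ∀ t, 0 < h t) (ha : ∀ t, 0 < a t)
    (C : ℝ) (hC : 0 < C)
    (S R : ℝ)
    (hS : S = ∑ t, Real.sqrt (h t))
    (hR : R = ∑ t, h t / a t)
    (Nstar : Fin T → ℝ)
    (hNstar : ∀ t, Nstar t = (C + R) / S * Real.sqrt (h t) - h t / a t)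
    (hNpos : ∀ t, 0 < Nstar t) :
    (∑ t, Nstar t = C) ∧
    (∀ N : Fin T → ℝ, (∀ t, 0 < N t) → (∑ t, N t ≤ C) →
      S ^ 2 / (C + R) ≤ ∑ t, h t / (N t + h t / a t)) ∧
    (∑ t, h t / (Nstar t + h t / a t) = S ^ 2 / (C + R)) :=
  optimal_sampling_strategy_general T hT h a hh ha C S R hS hR Nstar hNstar
end
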